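/- Let λ ≠ 0, a ≠ 0, b, d ∈ ℝ, and define σ(s) = (x(s), y(s), z(s)) for as + b > 0 by x(s) = ((b+as)/a)(λ/√(1+λ²)) cos( (1/λ) arctanh(√((1+λ²)/(1+(b+as)²+λ²))) ), y(s) = -((b+as)/a)(λ/√(1+λ²)) sin( (1/λ) arctanh(√((1+λ²)/(1+(b+as)²+λ²))) ), z(s) = (1/a)√(1+(b+as)²+λ²)/√(1+λ²). Then σ is a unit-speed curve: |σ'(s)| = 1 for all s with as + b > 0. -/

import Mathlib

/-- Inverse hyperbolic tangent. -/
noncomputable def artanh (x : ℝ) : ℝ := Real.log ((1 + x) / (1 - x)) / 2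

/-- A point of `ℝ³` as Euclidean space. -/
noncomputable def V3 (x y z : ℝ) : EuclideanSpace ℝ (Fin 3) :=
  (WithLp.equiv 2 (Fin 3 → ℝ)).symm ![x, y, z]

/-!
In cylindrical coordinates the curve is `(r cos θ, -r sin θ, z)`, whose speed is
`√(r'² + (r θ')² + z'²)`. With `u = b + a s`, `p = √(1 + λ²)` and `q = √(1 + u² + λ²)`, the
radius `r = u λ / (a p)` has `r' = λ / p`, the height `z = q / (a p)` has `z' = u / (p q)`, and
`θ = artanh (p / q) / λ` has `r θ' = -1 / q` because `1 - (p / q)² = u² / q²`. Hence the squared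
speed is `λ² / p² + (p² + u²) / (p² q²) = (λ² + 1) / p² = 1`.
-/

open Real hiding artanh

theorem norm_V3 (x y z : ℝ) : ‖V3 x y z‖ = √(x ^ 2 + y ^ 2 + z ^ 2) := by
  simp [V3, EuclideanSpace.norm_eq, Fin.sum_univ_three, sq_abs]

theorem HasDerivAt.V3 {x y z : ℝ → ℝ} {x' y' z' s : ℝ} (hx : HasDerivAt x x' s)
    (hy : HasDerivAt y y' s) (hz : HasDerivAt z z' s) :
    HasDerivAt (fun t => V3 (x t) (y t) (z t)) (V3 x' y' z') s := by
  have hvec : HasDerivAt (fun t => ![x t, y t, z t]) ![x', y', z'] s := by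
    rw [hasDerivAt_pi]
    intro i
    fin_cases i <;> simpa
  exact (PiLp.continuousLinearEquiv 2 ℝ (fun _ : Fin 3 => ℝ)).symm.hasFDerivAt.comp_hasDerivAt s
    hvec

theorem hasDerivAt_artanh {x : ℝ} (h₁ : -1 < x) (h₂ : x < 1) :
    HasDerivAt artanh (1 - x ^ 2)⁻¹ x := by
  have hp : 0 < 1 + x := by linarith
  have hm : 0 < 1 - x := by linarith
  have h := ((((hasDerivAt_id x).const_add 1).div ((hasDerivAt_id x).const_sub 1)
    hm.ne').log (div_pos hp hm).ne').div_const 2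
  refine h.congr_deriv ?_
  simp only [Pi.div_apply, id]
  rw [show 1 - x ^ 2 = (1 - x) * (1 + x) by ring]
  field_simp
  ring

theorem exists_hasDerivAt_cylindrical_norm_eq {r θ z : ℝ → ℝ} {r' θ' z' s : ℝ}
    (hr : HasDerivAt r r' s) (hθ : HasDerivAt θ θ' s) (hz : HasDerivAt z z' s) :
    ∃ v, HasDerivAt (fun t => V3 (r t * cos (θ t)) (-(r t * sin (θ t))) (z t)) v s ∧
      ‖v‖ = √(r' ^ 2 + (r s * θ') ^ 2 + z' ^ 2) := by
  refine ⟨_, (hr.mul hθ.cos).V3 (hr.mul hθ.sin).neg hz, ?_⟩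
  rw [norm_V3]
  congr 1
  linear_combination (r' ^ 2 + (r s * θ') ^ 2) * sin_sq_add_cos_sq (θ s)

section Whirl

variable (lam a b : ℝ)

noncomputable def whirlRadius (s : ℝ) : ℝ := (b + a * s) / a * (lam / √(1 + lam ^ 2))

noncomputable def whirlAngle (s : ℝ) : ℝ :=
  artanh (√((1 + lam ^ 2) / (1 + (b + a * s) ^ 2 + lam ^ 2))) / lam

noncomputable def whirlHeight (s : ℝ) : ℝ :=
  1 / a * (√(1 + (b + a * s) ^ 2 + lam ^ 2) / √(1 + lam ^ 2))

variable {lam a b}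

theorem hasDerivAt_whirlRadius (ha : a ≠ 0) (s : ℝ) :
    HasDerivAt (whirlRadius lam a b) (lam / √(1 + lam ^ 2)) s := by
  have h := ((((hasDerivAt_id s).const_mul a).const_add b).div_const a).mul_const
    (lam / √(1 + lam ^ 2))
  refine h.congr_deriv ?_
  field_simp

theorem hasDerivAt_one_add_sq_add_sq (s : ℝ) :
    HasDerivAt (fun t => 1 + (b + a * t) ^ 2 + lam ^ 2) (2 * (b + a * s) * a) s := by
  have h :=
    (((((hasDerivAt_id s).const_mul a).const_add b).pow 2).const_add 1).add_const (lam ^ 2)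
  refine h.congr_deriv ?_
  simp only [id, Nat.cast_ofNat]
  ring

theorem hasDerivAt_whirlHeight (ha : a ≠ 0) (s : ℝ) :
    HasDerivAt (whirlHeight lam a b)
      ((b + a * s) / (√(1 + (b + a * s) ^ 2 + lam ^ 2) * √(1 + lam ^ 2))) s := by
  have hQ : 0 < 1 + (b + a * s) ^ 2 + lam ^ 2 := by positivity
  have h := (((hasDerivAt_one_add_sq_add_sq s).sqrt hQ.ne').div_const √(1 + lam ^ 2)).const_mul
    (1 / a)
  refine h.congr_deriv ?_
  field_simp

theorem hasDerivAt_whirlAngle {s : ℝ} (hs : 0 < b + a * s) :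
    HasDerivAt (whirlAngle lam a b)
      (-(a * √(1 + lam ^ 2)) / (lam * (b + a * s) * √(1 + (b + a * s) ^ 2 + lam ^ 2))) s := by
  have hP : 0 < 1 + lam ^ 2 := by positivity
  have hQ : 0 < 1 + (b + a * s) ^ 2 + lam ^ 2 := by positivity
  have hw := ((hasDerivAt_const s (1 + lam ^ 2)).div (hasDerivAt_one_add_sq_add_sq s) hQ.ne').sqrt
    (div_pos hP hQ).ne'
  have hw_lt : √((1 + lam ^ 2) / (1 + (b + a * s) ^ 2 + lam ^ 2)) < 1 := by
    rw [sqrt_lt' one_pos, one_pow, div_lt_one hQ]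
    nlinarith
  have hw_gt : -1 < √((1 + lam ^ 2) / (1 + (b + a * s) ^ 2 + lam ^ 2)) := by
    linarith [sqrt_nonneg ((1 + lam ^ 2) / (1 + (b + a * s) ^ 2 + lam ^ 2))]
  refine (((hasDerivAt_artanh hw_gt hw_lt).comp s hw).div_const lam).congr_deriv ?_
  have h_one_sub : 1 - (1 + lam ^ 2) / (1 + (b + a * s) ^ 2 + lam ^ 2)
      = (b + a * s) ^ 2 / (1 + (b + a * s) ^ 2 + lam ^ 2) := by
    field_simp
    ring
  simp only [Pi.div_apply]
  rw [sq_sqrt (div_pos hP hQ).le, sqrt_div hP.le, h_one_sub]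
  have hp := sq_sqrt hP.le
  have hq := sq_sqrt hQ.le
  have hp0 := (sqrt_pos.2 hP).ne'
  have hq0 := (sqrt_pos.2 hQ).ne'
  generalize √(1 + lam ^ 2) = p at *
  generalize √(1 + (b + a * s) ^ 2 + lam ^ 2) = q at *
  rw [← hp, ← hq]
  field_simp
  ring

theorem whirl_speed_sq {s : ℝ} (hlam : lam ≠ 0) (ha : a ≠ 0) (hs : 0 < b + a * s) :
    (lam / √(1 + lam ^ 2)) ^ 2 +
      (whirlRadius lam a b s *
        (-(a * √(1 + lam ^ 2)) / (lam * (b + a * s) * √(1 + (b + a * s) ^ 2 + lam ^ 2)))) ^ 2 +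
      ((b + a * s) / (√(1 + (b + a * s) ^ 2 + lam ^ 2) * √(1 + lam ^ 2))) ^ 2 = 1 := by
  have hP : 0 < 1 + lam ^ 2 := by positivity
  have hQ : 0 < 1 + (b + a * s) ^ 2 + lam ^ 2 := by positivity
  have hp := sq_sqrt hP.le
  have hq := sq_sqrt hQ.le
  have hp0 := (sqrt_pos.2 hP).ne'
  have hq0 := (sqrt_pos.2 hQ).ne'
  unfold whirlRadius
  generalize √(1 + lam ^ 2) = p at *
  generalize √(1 + (b + a * s) ^ 2 + lam ^ 2) = q at *
  field_simp
  linear_combination (1 - q ^ 2) * hp - hq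

end Whirl

/-- the whirl-rectifying parametrization is unit speed on
`{s : as + b > 0}`. -/
theorem whirl_rectifying_unit_speed
    (lam a b : ℝ) (hlam : lam ≠ 0) (ha : a ≠ 0)
    (σ : ℝ → EuclideanSpace ℝ (Fin 3))
    (hσ : ∀ s, σ s = V3
      (((b + a * s) / a) * (lam / Real.sqrt (1 + lam ^ 2)) *
        Real.cos (artanh (Real.sqrt ((1 + lam ^ 2) / (1 + (b + a * s) ^ 2 + lam ^ 2))) / lam))
      (-(((b + a * s) / a) * (lam / Real.sqrt (1 + lam ^ 2)) *
        Real.sin (artanh (Real.sqrt ((1 + lam ^ 2) / (1 + (b + a * s) ^ 2 + lam ^ 2))) / lam)))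
      ((1 / a) * (Real.sqrt (1 + (b + a * s) ^ 2 + lam ^ 2) / Real.sqrt (1 + lam ^ 2)))) :
    ∀ s : ℝ, 0 < a * s + b →
      ∃ v : EuclideanSpace ℝ (Fin 3), HasDerivAt σ v s ∧ ‖v‖ = 1 := by
  intro s hs
  have hu : 0 < b + a * s := by linarith
  have hσ_cyl : σ = fun t => V3 (whirlRadius lam a b t * cos (whirlAngle lam a b t))
      (-(whirlRadius lam a b t * sin (whirlAngle lam a b t))) (whirlHeight lam a b t) :=
    funext hσ
  obtain ⟨v, hv, hv_norm⟩ := exists_hasDerivAt_cylindrical_norm_eq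
    (hasDerivAt_whirlRadius ha s) (hasDerivAt_whirlAngle hu) (hasDerivAt_whirlHeight ha s)
  refine ⟨v, hσ_cyl ▸ hv, ?_⟩
  rw [hv_norm, whirl_speed_sq hlam ha hu, sqrt_one]
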